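/- arXiv:1602.05908 — 3 statements merged into one kernel-verified Lean document; each statement's English description precedes it below -/
import Mathlib

section
/- Let f : ℝⁿ → ℝ be three times continuously differentiable with L-Lipschitz third derivative. If x is a critical point with ∇f(x) = 0, ∇²f(x) positive semidefinite, and ∇³f(x)(u,u,u) = 0 for every u in the kernel of ∇²f(x), then x is a third order local minimum: there exist constants C, ε > 0 such that f(y) ≥ f(x) - C‖y-x‖⁴ for all y with ‖y-x‖ ≤ ε. -/
noncomputable def frob3 {n : ℕ}
    (T : ContinuousMultilinearMap ℝ (fun _ : Fin 3 => EuclideanSpace ℝ (Fin n)) ℝ) : ℝ :=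
  Real.sqrt (∑ i : Fin n, ∑ j : Fin n, ∑ k : Fin n,
    (T ![EuclideanSpace.single i 1, EuclideanSpace.single j 1, EuclideanSpace.single k 1]) ^ 2)

/-!
Taylor's theorem with Lagrange remainder along the segment from `x` to `y = x + v` gives
`f y = f x + Q(v,v)/2 + D³f(ξ)(v,v,v)/6` with `Q = D²f(x)`, and the Lipschitz bound replaces
`D³f(ξ)` by `T = D³f(x)` at a cost of `|L|‖v‖⁴` (the Frobenius norm dominates the operator norm).
Split `v = u + w` with `u ∈ ker Q` and `w ⊥ ker Q`. Then `Q(v,v) = Q(w,w) ≥ c‖w‖²`, by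
compactness of the unit sphere of `(ker Q)ᗮ`, and `T(u,u,u) = 0` gives
`|T(v,v,v)| ≤ 3‖T‖‖v‖²‖w‖`. Completing the square in `‖w‖` bounds `Q(v,v)/2 + T(v,v,v)/6` from
below by `-‖T‖²‖v‖⁴/(8c)`.
-/

open Finset Set Nat

theorem Fintype.sum_fin_three_arrow {ι M : Type*} [Fintype ι] [AddCommMonoid M]
    (g : (Fin 3 → ι) → M) : ∑ r, g r = ∑ i, ∑ j, ∑ k, g ![i, j, k] := by
  simp only [← (Fin.consEquiv fun _ => ι).sum_comp, Fintype.sum_prod_type, Fintype.sum_unique]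
  rfl

section Frobenius

variable {n : ℕ} (S : ContinuousMultilinearMap ℝ (fun _ : Fin 3 => EuclideanSpace ℝ (Fin n)) ℝ)

theorem frob3_sq :
    frob3 S ^ 2 = ∑ r : Fin 3 → Fin n, S (fun i => EuclideanSpace.single (r i) 1) ^ 2 := by
  rw [frob3, Real.sq_sqrt (by positivity), Fintype.sum_fin_three_arrow]
  congr! with i _ j _ k _ l
  fin_cases l <;> rfl

theorem norm_le_frob3 : ‖S‖ ≤ frob3 S := by
  refine S.opNorm_le_bound (Real.sqrt_nonneg _) fun m => ?_
  have expand : S m = ∑ r : Fin 3 → Fin n,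
      (∏ i, m i (r i)) * S (fun i => EuclideanSpace.single (r i) 1) := by
    conv_lhs => rw [← funext fun i => (EuclideanSpace.basisFun (Fin n) ℝ).sum_repr (m i)]
    simp [S.map_sum, S.map_smul_univ]
  have hnorm : ∑ r : Fin 3 → Fin n, (∏ i, m i (r i)) ^ 2 = (∏ i, ‖m i‖) ^ 2 := by
    simp_rw [← Finset.prod_pow, EuclideanSpace.norm_sq_eq, Real.norm_eq_abs, sq_abs,
      Fintype.prod_sum]
  refine abs_le_of_sq_le_sq ?_ (mul_nonneg (Real.sqrt_nonneg _) (by positivity))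
  calc S m ^ 2 ≤ (∑ r : Fin 3 → Fin n, (∏ i, m i (r i)) ^ 2) *
        ∑ r : Fin 3 → Fin n, S (fun i => EuclideanSpace.single (r i) 1) ^ 2 :=
        expand ▸ sum_mul_sq_le_sq_mul_sq _ _ _
    _ = (frob3 S * ∏ i, ‖m i‖) ^ 2 := by rw [hnorm, ← frob3_sq]; ring

end Frobenius

section Taylor

variable {E : Type*} [NormedAddCommGroup E] [NormedSpace ℝ E]

theorem iteratedDeriv_comp_add_smul {F : Type*} [NormedAddCommGroup F] [NormedSpace ℝ F]
    {f : E → F} {N : WithTop ℕ∞} (hf : ContDiff ℝ N f) (x v : E) (t : ℝ) {k : ℕ}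
    (hk : k ≤ N) :
    iteratedDeriv k (fun t : ℝ => f (x + t • v)) t =
      iteratedFDeriv ℝ k f (x + t • v) (fun _ => v) := by
  have hline : (fun t : ℝ => f (x + t • v)) =
      (fun z => f (x + z)) ∘ ContinuousLinearMap.toSpanSingleton ℝ v := rfl
  have hshift : ContDiff ℝ N (fun z => f (x + z)) := hf.comp (contDiff_const.add contDiff_id)
  rw [iteratedDeriv_eq_iteratedFDeriv, hline,
    ContinuousLinearMap.iteratedFDeriv_comp_right _ hshift _ hk,
    iteratedFDeriv_comp_add_left']
  simp

theorem exists_taylor_mean_remainder_lagrange_segment {f : E → ℝ} {n : ℕ}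
    (hf : ContDiff ℝ (n + 1) f) (x v : E) :
    ∃ ξ ∈ Ioo (0 : ℝ) 1, f (x + v) =
      ∑ k ∈ range (n + 1), iteratedFDeriv ℝ k f x (fun _ => v) / k ! +
        iteratedFDeriv ℝ (n + 1) f (x + ξ • v) (fun _ => v) / (n + 1)! := by
  set g : ℝ → ℝ := fun t => f (x + t • v)
  have hg : ContDiff ℝ (n + 1) g := hf.comp (contDiff_const.add (contDiff_id.smul contDiff_const))
  obtain ⟨ξ, hξ, hrem⟩ := taylor_mean_remainder_lagrange_iteratedDeriv zero_ne_one hg.contDiffOn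
  rw [uIoo_of_le zero_le_one] at hξ
  refine ⟨ξ, hξ, ?_⟩
  rw [taylor_within_apply, sub_eq_iff_eq_add'] at hrem
  have hcoeff : ∀ k ∈ range (n + 1),
      iteratedDerivWithin k g (uIcc 0 1) 0 = iteratedFDeriv ℝ k f x (fun _ => v) := by
    intro k hk
    have hkn : (k : WithTop ℕ∞) ≤ n + 1 := by exact_mod_cast (mem_range.1 hk).le
    rw [iteratedDerivWithin_eq_iteratedDeriv (uniqueDiffOn_uIcc zero_ne_one)
      ((hg.of_le hkn).contDiffAt) left_mem_uIcc, iteratedDeriv_comp_add_smul hf x v 0 hkn,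
      zero_smul, add_zero]
  calc f (x + v) = g 1 := by simp [g]
    _ = _ := by
      rw [hrem, iteratedDeriv_comp_add_smul hf x v ξ (by norm_cast)]
      simp only [sub_zero, one_pow, mul_one, smul_eq_mul]
      congr 1
      exact sum_congr rfl fun k hk => by rw [hcoeff k hk, inv_mul_eq_div]

theorem sub_abs_mul_le_iteratedFDeriv_add_smul {f : E → ℝ} {k : ℕ} {L : ℝ}
    (hLip : ∀ y z, ‖iteratedFDeriv ℝ k f y - iteratedFDeriv ℝ k f z‖ ≤ L * ‖y - z‖)
    (x v : E) {ξ : ℝ} (hξ : ξ ∈ Icc (0 : ℝ) 1) :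
    iteratedFDeriv ℝ k f x (fun _ => v) - |L| * ‖v‖ ^ (k + 1) ≤
      iteratedFDeriv ℝ k f (x + ξ • v) (fun _ => v) := by
  have hξv : ‖ξ • v‖ ≤ ‖v‖ := by
    rw [norm_smul, Real.norm_of_nonneg hξ.1]
    exact mul_le_of_le_one_left (norm_nonneg v) hξ.2
  have hdiff : ‖(iteratedFDeriv ℝ k f (x + ξ • v) - iteratedFDeriv ℝ k f x) (fun _ => v)‖ ≤
      |L| * ‖v‖ ^ (k + 1) :=
    calc _ ≤ ‖iteratedFDeriv ℝ k f (x + ξ • v) - iteratedFDeriv ℝ k f x‖ * ‖v‖ ^ k :=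
          ContinuousMultilinearMap.le_opNorm_mul_pow_of_le _ (pi_norm_const_le v)
      _ ≤ L * ‖ξ • v‖ * ‖v‖ ^ k := by
          gcongr
          simpa using hLip (x + ξ • v) x
      _ ≤ |L| * ‖v‖ * ‖v‖ ^ k := by gcongr; exact le_abs_self L
      _ = |L| * ‖v‖ ^ (k + 1) := by ring
  rw [sub_apply, Real.norm_eq_abs] at hdiff
  linarith [abs_le.1 hdiff]

end Taylor

theorem apply_eq_zero_of_apply_self_eq_zero {E : Type*} [NormedAddCommGroup E]
    [NormedSpace ℝ E] {Q : E →L[ℝ] E →L[ℝ] ℝ} (hsymm : ∀ u w, Q u w = Q w u)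
    (hpsd : ∀ u, 0 ≤ Q u u) {u : E} (hu : Q u u = 0) : Q u = 0 := by
  ext w
  have hquad : ∀ t : ℝ, 0 ≤ Q w w * (t * t) + 2 * Q u w * t + 0 := fun t => by
    have := hpsd (u + t • w)
    simp only [map_add, map_smul, add_apply, smul_apply, smul_eq_mul, hu, hsymm w u] at this
    linarith
  have hdisc := discrim_le_zero hquad
  rw [discrim, mul_zero, sub_zero] at hdisc
  simpa using le_antisymm hdisc (sq_nonneg _)

theorem ContinuousMultilinearMap.norm_apply_const_sub_le {𝕜 ι E F : Type*}
    [NontriviallyNormedField 𝕜] [Fintype ι] [NormedAddCommGroup E] [NormedSpace 𝕜 E]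
    [NormedAddCommGroup F] [NormedSpace 𝕜 F] (T : ContinuousMultilinearMap 𝕜 (fun _ : ι => E) F)
    {u v : E} (huv : ‖u‖ ≤ ‖v‖) :
    ‖T (fun _ => v) - T (fun _ => u)‖ ≤
      ‖T‖ * Fintype.card ι * ‖v‖ ^ (Fintype.card ι - 1) * ‖v - u‖ := by
  refine (T.norm_image_sub_le _ _).trans ?_
  have hmax : max ‖fun _ : ι => v‖ ‖fun _ : ι => u‖ ≤ ‖v‖ :=
    max_le (pi_norm_const_le v) ((pi_norm_const_le u).trans huv)
  gcongr
  exact pi_norm_const_le (v - u)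

section InnerProductSpace

variable {E : Type*} [NormedAddCommGroup E] [InnerProductSpace ℝ E] [FiniteDimensional ℝ E]
  {Q : E →L[ℝ] E →L[ℝ] ℝ}

theorem exists_pos_mul_norm_sq_le_of_mem_orthogonal_ker (hsymm : ∀ u w, Q u w = Q w u)
    (hpsd : ∀ u, 0 ≤ Q u u) :
    ∃ c > 0, ∀ w ∈ Q.kerᗮ, c * ‖w‖ ^ 2 ≤ Q w w := by
  set K := Q.ker
  have hcompact : IsCompact ((Kᗮ : Set E) ∩ Metric.sphere 0 1) :=
    (isCompact_sphere 0 1).inter_left (Submodule.closed_of_finiteDimensional _)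
  have hpos : ∀ w ∈ (Kᗮ : Set E) ∩ Metric.sphere 0 1, 0 < Q w w := by
    rintro w ⟨hwK, hw⟩
    refine (hpsd w).lt_of_ne fun h => ?_
    have hw0 : w = 0 := Submodule.disjoint_def.1 K.orthogonal_disjoint w
      (apply_eq_zero_of_apply_self_eq_zero hsymm hpsd h.symm) hwK
    simp [hw0] at hw
  obtain ⟨c, hc, hcle⟩ := hcompact.exists_forall_le'
    (Q.continuous₂.comp (continuous_id.prodMk continuous_id)).continuousOn hpos
  refine ⟨c, hc, fun w hw => ?_⟩
  rcases eq_or_ne w 0 with rfl | hw0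
  · simp
  have hnorm : 0 < ‖w‖ := norm_pos_iff.2 hw0
  have : c ≤ Q (‖w‖⁻¹ • w) (‖w‖⁻¹ • w) :=
    hcle _ ⟨Kᗮ.smul_mem _ hw, by simp [norm_smul, hnorm.ne']⟩
  simp only [map_smul, smul_apply, smul_eq_mul] at this
  rw [← mul_assoc, ← sq, inv_pow, ← div_eq_inv_mul, le_div_iff₀ (by positivity)] at this
  exact this

theorem exists_neg_mul_norm_pow_four_le_quadratic_add_cubic (hsymm : ∀ u w, Q u w = Q w u)
    (hpsd : ∀ u, 0 ≤ Q u u) {T : ContinuousMultilinearMap ℝ (fun _ : Fin 3 => E) ℝ}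
    (hT : ∀ u, Q u = 0 → T (fun _ => u) = 0) :
    ∃ C > 0, ∀ v, -(C * ‖v‖ ^ 4) ≤ Q v v / 2 + T (fun _ => v) / 6 := by
  obtain ⟨c, hc, hcQ⟩ := exists_pos_mul_norm_sq_le_of_mem_orthogonal_ker hsymm hpsd
  refine ⟨‖T‖ ^ 2 / (8 * c) + 1, by positivity, fun v => ?_⟩
  have hu : Q (Q.ker.starProjection v) = 0 := Q.ker.starProjection_apply_mem v
  have hw := Q.ker.sub_starProjection_mem_orthogonal v
  have huv := Q.ker.norm_starProjection_apply_le v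
  generalize Q.ker.starProjection v = u at hu hw huv
  have hquad : c * ‖v - u‖ ^ 2 ≤ Q v v := by
    have hvw : Q v v = Q (v - u) (v - u) := by simp [hu, hsymm v u]
    exact hvw ▸ hcQ _ hw
  have hcubic : |T (fun _ => v)| ≤ ‖T‖ * 3 * ‖v‖ ^ 2 * ‖v - u‖ := by
    simpa [hT u hu] using T.norm_apply_const_sub_le huv
  have hsquare : c * ‖v - u‖ ^ 2 / 2 - ‖T‖ * ‖v‖ ^ 2 * ‖v - u‖ / 2 + ‖T‖ ^ 2 / (8 * c) * ‖v‖ ^ 4 =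
      (2 * c * ‖v - u‖ - ‖T‖ * ‖v‖ ^ 2) ^ 2 / (8 * c) := by
    field_simp
    ring
  have : 0 ≤ (2 * c * ‖v - u‖ - ‖T‖ * ‖v‖ ^ 2) ^ 2 / (8 * c) := by positivity
  linarith [neg_abs_le (T fun _ => v), pow_nonneg (norm_nonneg v) 4]

end InnerProductSpace

theorem third_order_condition_sufficient {n : ℕ} (f : EuclideanSpace ℝ (Fin n) → ℝ) (L : ℝ)
    (hf : ContDiff ℝ 3 f)
    (hLip : ∀ x y, frob3 (iteratedFDeriv ℝ 3 f x - iteratedFDeriv ℝ 3 f y) ≤ L * ‖x - y‖)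
    (x : EuclideanSpace ℝ (Fin n))
    (hgrad : gradient f x = 0)
    (hpsd : ∀ u, 0 ≤ iteratedFDeriv ℝ 2 f x ![u, u])
    (hker : ∀ u, (∀ w, iteratedFDeriv ℝ 2 f x ![u, w] = 0) →
      iteratedFDeriv ℝ 3 f x ![u, u, u] = 0) :
    ∃ C > 0, ∃ ε > 0, ∀ y, ‖y - x‖ ≤ ε → f y ≥ f x - C * ‖y - x‖ ^ 4 := by
  set Q := fderiv ℝ (fderiv ℝ f) x
  have hfderiv : fderiv ℝ f x = 0 := by rw [← toDual_gradient, hgrad, map_zero]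
  have hsymm : ∀ u w, Q u w = Q w u := hf.contDiffAt.isSymmSndFDerivAt (by norm_num)
  have hQpsd : ∀ u, 0 ≤ Q u u := fun u => by simpa [iteratedFDeriv_two_apply] using hpsd u
  have hQker : ∀ u, Q u = 0 → iteratedFDeriv ℝ 3 f x (fun _ => u) = 0 := fun u hu => by
    simpa [Matrix.vec_single_eq_const, Matrix.vecCons_const] using
      hker u fun w => by simp [iteratedFDeriv_two_apply, Q, hu]
  obtain ⟨C, hC, hCbound⟩ :=
    exists_neg_mul_norm_pow_four_le_quadratic_add_cubic hsymm hQpsd hQker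
  refine ⟨C + |L| / 6, by positivity, 1, one_pos, fun y _ => ?_⟩
  obtain ⟨ξ, hξ, htaylor⟩ := exists_taylor_mean_remainder_lagrange_segment (n := 2) hf x (y - x)
  set v := y - x
  rw [add_sub_cancel] at htaylor
  simp only [sum_range_succ, sum_range_zero, iteratedFDeriv_zero_apply, iteratedFDeriv_one_apply,
    iteratedFDeriv_two_apply, hfderiv] at htaylor
  norm_num [Nat.factorial] at htaylor
  have hrem := sub_abs_mul_le_iteratedFDeriv_add_smul
    (fun y z => (norm_le_frob3 _).trans (hLip y z)) x v (Ioo_subset_Icc_self hξ)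
  norm_num at hrem
  linarith [hCbound v]
end

section
/- Let f be a homogeneous degree-4 polynomial on ℝⁿ with f(z) < 0 for some unit vector z, and g(x) = f(x) + ‖x‖⁶. Then x = 0 is not a fourth order local minimum of g: g(0) - g(tz) = -f(z)t⁴ - t⁶ ≥ (|f(z)|/2)t⁴ for all small t > 0, violating the fourth order condition. -/
/-!
Along the unit ray `t ↦ t • z` we have `g (t • z) = f z * t ^ 4 + t ^ 6 ≤ f z / 2 * t ^ 4` once
`t ^ 2 ≤ -f z / 2`, so `g` drops below `g 0 = 0` at order `t ^ 4`, whereas a fourth order local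
minimum only allows a drop of order `t ^ 5`.
-/

open Filter Topology

theorem apply_zero_of_map_smul_eq_pow_mul {E : Type*} [AddCommMonoid E] [Module ℝ E] {k : ℕ}
    (hk : k ≠ 0) {f : E → ℝ} (hf : ∀ (t : ℝ) (x : E), f (t • x) = t ^ k * f x) : f 0 = 0 := by
  simpa [hk] using hf 0 0

theorem mul_pow_four_add_pow_six_le {a t : ℝ} (ht : t ^ 2 ≤ -a / 2) :
    a * t ^ 4 + t ^ 6 ≤ a / 2 * t ^ 4 := by
  nlinarith [mul_le_mul_of_nonneg_right ht (by positivity : (0 : ℝ) ≤ t ^ 4)]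

theorem not_eventually_mul_pow_four_le_mul_pow_five {c : ℝ} (hc : 0 < c) (C : ℝ) :
    ¬ ∀ᶠ t in 𝓝[>] (0 : ℝ), c * t ^ 4 ≤ C * t ^ 5 := by
  intro hle
  have hsmall : ∀ᶠ t in 𝓝[>] (0 : ℝ), C * t < c := by
    have : Tendsto (fun t : ℝ => C * t) (𝓝[>] 0) (𝓝 0) := by
      simpa using ((continuous_const_mul C).tendsto 0).mono_left nhdsWithin_le_nhds
    exact this.eventually (gt_mem_nhds hc)
  obtain ⟨t, ht, hle, hsmall⟩ := (eventually_mem_nhdsWithin.and (hle.and hsmall)).exists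
  have ht4 : 0 < t ^ 4 := pow_pos ht 4
  nlinarith [mul_lt_mul_of_pos_right hsmall ht4]

theorem negative_direction_not_fourth_order_min {n : ℕ}
    (f : EuclideanSpace ℝ (Fin n) → ℝ)
    (hhom : ∀ (t : ℝ) (x : EuclideanSpace ℝ (Fin n)), f (t • x) = t ^ 4 * f x)
    (z : EuclideanSpace ℝ (Fin n)) (hz : ‖z‖ = 1) (hfz : f z < 0)
    (g : EuclideanSpace ℝ (Fin n) → ℝ) (hg : ∀ x, g x = f x + ‖x‖ ^ 6) :
    (∃ t₀ > (0 : ℝ), ∀ t : ℝ, 0 < t → t ≤ t₀ →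
      g 0 - g (t • z) ≥ |f z| / 2 * t ^ 4) ∧
    ¬ (∃ C > (0 : ℝ), ∃ ε > (0 : ℝ), ∀ y : EuclideanSpace ℝ (Fin n),
        ‖y‖ ≤ ε → g y ≥ g 0 - C * ‖y‖ ^ 5) := by
  have hg0 : g 0 = 0 := by simp [hg, apply_zero_of_map_smul_eq_pow_mul four_ne_zero hhom]
  have hnorm : ∀ {t : ℝ}, 0 ≤ t → ‖t • z‖ = t := fun ht => by simp [norm_smul_of_nonneg ht, hz]
  have hray : ∀ {t : ℝ}, 0 ≤ t → g (t • z) = f z * t ^ 4 + t ^ 6 := fun ht => by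
    rw [hg, hhom, hnorm ht, mul_comm]
  have habs : |f z| = -f z := abs_of_neg hfz
  have hc : 0 < |f z| / 2 := half_pos (abs_pos.2 hfz.ne)
  have hdrop : ∃ t₀ > (0 : ℝ), ∀ t : ℝ, 0 < t → t ≤ t₀ → g 0 - g (t • z) ≥ |f z| / 2 * t ^ 4 := by
    refine ⟨√(|f z| / 2), Real.sqrt_pos.2 hc, fun t ht hle => ?_⟩
    have ht2 : t ^ 2 ≤ -f z / 2 := habs ▸ (Real.le_sqrt' ht).1 hle
    rw [hg0, hray ht.le, habs]
    linarith [mul_pow_four_add_pow_six_le ht2]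
  refine ⟨hdrop, ?_⟩
  rintro ⟨C, -, ε, hε, hmin⟩
  obtain ⟨t₀, ht₀, hdrop⟩ := hdrop
  refine not_eventually_mul_pow_four_le_mul_pow_five hc C ?_
  filter_upwards [Ioc_mem_nhdsGT (lt_min hε ht₀)] with t ⟨ht, htle⟩
  have hupper := hmin (t • z) ((hnorm ht.le).trans_le (htle.trans (min_le_left _ _)))
  rw [hnorm ht.le] at hupper
  linarith [hdrop t ht (htle.trans (min_le_right _ _))]
end

section
/- Let f be a homogeneous degree-4 polynomial on ℝⁿ and g(x) = f(x) + ‖x‖⁶. If x ≠ 0 is a fourth order local minimum of g, then f(x) < 0. Consequently if f is nonnegative, 0 is the only candidate fourth order local minimum of g. -/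
/-!
Along the ray through `x ≠ 0`, `g (t • x) = f x * t ^ 4 + ‖x‖ ^ 6 * t ^ 6`, and `t = 1` is again a
fourth order local minimum. A minimum of order at least two is a critical point, so
`4 f x + 6 ‖x‖ ^ 6 = 0`, whence `f x < 0`.
-/

/-- The paper's fourth order local minimum is the case `k = 4`, with error `‖y - x‖ ^ 5`. -/
def IsLocalMinOfOrder {E : Type*} [NormedAddCommGroup E] (g : E → ℝ) (x : E) (k : ℕ) : Prop :=
  ∃ C > (0 : ℝ), ∃ ε > (0 : ℝ), ∀ y, ‖y - x‖ ≤ ε → g y ≥ g x - C * ‖y - x‖ ^ (k + 1)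

namespace IsLocalMinOfOrder

variable {E : Type*} [NormedAddCommGroup E] [NormedSpace ℝ E] {g : E → ℝ} {x : E} {k : ℕ}

/-- Adding the error term `C ‖y - x‖ ^ (k + 1)`, which is flat to first order, turns `x` into
an ordinary local minimum. -/
theorem hasFDerivAt_eq_zero (hk : k ≠ 0) (h : IsLocalMinOfOrder g x k) {g' : E →L[ℝ] ℝ}
    (hg : HasFDerivAt g g' x) : g' = 0 := by
  obtain ⟨C, -, ε, hε, hmin⟩ := h
  have herr : HasFDerivAt (fun y => C * ‖y - x‖ ^ (k + 1)) (0 : E →L[ℝ] ℝ) x :=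
    (Asymptotics.isBigO_const_mul_self C _ _).hasFDerivAt (by omega)
  have hloc : IsLocalMin (fun y => g y + C * ‖y - x‖ ^ (k + 1)) x := by
    filter_upwards [Metric.closedBall_mem_nhds x hε] with y hy
    simpa [← dist_eq_norm] using (hmin y (dist_eq_norm y x ▸ hy) : _)
  simpa using hloc.hasFDerivAt_eq_zero (hg.add herr)

theorem hasDerivAt_eq_zero {φ : ℝ → ℝ} {t φ' : ℝ} (hk : k ≠ 0) (h : IsLocalMinOfOrder φ t k)
    (hφ : HasDerivAt φ φ' t) : φ' = 0 := by
  simpa using congrArg (fun L : ℝ →L[ℝ] ℝ => L 1) (h.hasFDerivAt_eq_zero hk hφ.hasFDerivAt)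

theorem comp_smul_right (h : IsLocalMinOfOrder g x k) (hx : x ≠ 0) :
    IsLocalMinOfOrder (fun t : ℝ => g (t • x)) 1 k := by
  obtain ⟨C, hC, ε, hε, hmin⟩ := h
  have hx' : 0 < ‖x‖ := norm_pos_iff.mpr hx
  have hdist (t : ℝ) : ‖t • x - x‖ = ‖t - 1‖ * ‖x‖ := by rw [← norm_smul, sub_smul, one_smul]
  refine ⟨C * ‖x‖ ^ (k + 1), by positivity, ε / ‖x‖, by positivity, fun t ht => ?_⟩
  have := hmin (t • x) (by rw [hdist]; exact (le_div_iff₀ hx').mp ht)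
  rw [hdist, mul_pow] at this
  simp only [one_smul]
  linarith

end IsLocalMinOfOrder

theorem neg_of_isLocalMinOfOrder_quartic_add_sextic {a b : ℝ} {k : ℕ} (hk : k ≠ 0) (hb : 0 < b)
    (h : IsLocalMinOfOrder (fun t : ℝ => a * t ^ 4 + b * t ^ 6) 1 k) : a < 0 := by
  have hderiv : HasDerivAt (fun t : ℝ => a * t ^ 4 + b * t ^ 6) (a * 4 + b * 6) 1 := by
    simpa using ((hasDerivAt_pow 4 (1 : ℝ)).const_mul a).fun_add
      ((hasDerivAt_pow 6 (1 : ℝ)).const_mul b)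
  linarith [h.hasDerivAt_eq_zero hk hderiv]

theorem fourth_order_min_of_regularized_quartic_negative {n : ℕ}
    (f : EuclideanSpace ℝ (Fin n) → ℝ)
    (hhom : ∀ (t : ℝ) (x : EuclideanSpace ℝ (Fin n)), f (t • x) = t ^ 4 * f x)
    (g : EuclideanSpace ℝ (Fin n) → ℝ) (hg : ∀ x, g x = f x + ‖x‖ ^ 6) :
    (∀ x : EuclideanSpace ℝ (Fin n), x ≠ 0 →
      (∃ C > (0 : ℝ), ∃ ε > (0 : ℝ), ∀ y, ‖y - x‖ ≤ ε → g y ≥ g x - C * ‖y - x‖ ^ 5) →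
      f x < 0) ∧
    ((∀ y, 0 ≤ f y) →
      ∀ x : EuclideanSpace ℝ (Fin n),
        (∃ C > (0 : ℝ), ∃ ε > (0 : ℝ), ∀ y, ‖y - x‖ ≤ ε → g y ≥ g x - C * ‖y - x‖ ^ 5) →
        x = 0) := by
  have hneg (x : EuclideanSpace ℝ (Fin n)) (hx : x ≠ 0) (hmin : IsLocalMinOfOrder g x 4) :
      f x < 0 := by
    have hray : (fun t : ℝ => g (t • x)) = fun t => f x * t ^ 4 + ‖x‖ ^ 6 * t ^ 6 := by
      ext t
      rw [hg, hhom, norm_smul, Real.norm_eq_abs, mul_pow, Even.pow_abs (by decide : Even 6)]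
      ring
    have hray_min := hmin.comp_smul_right hx
    rw [hray] at hray_min
    exact neg_of_isLocalMinOfOrder_quartic_add_sextic (by norm_num) (by positivity) hray_min
  refine ⟨hneg, fun hf x hmin => ?_⟩
  by_contra hx
  exact (hf x).not_gt (hneg x hx hmin)
end
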